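/- The total mass of the stationary profile is ∫_{-∞}^{V_F} ρ(v) dv = N · K((V_R−V_0)/√a, (V_F−V_0)/√a), where K(w_R,w_F) := ∫_0^∞ (e^{-s²/2}/s)(e^{s·w_F} − e^{s·w_R}) ds. Consequently, ∫_{-∞}^{V_F} ρ(v) dv + τN = 1 holds if and only if N·(τ + K((V_R−V_0)/√a, (V_F−V_0)/√a)) = 1. -/

import Mathlib

/-- K(w_R, w_F) := ∫_0^∞ (e^{-s²/2}/s)(e^{s·w_F} − e^{s·w_R}) ds (Lebesgue integral on (0,∞)). -/
noncomputable def K (wR wF : ℝ) : ℝ :=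
  ∫ s in Set.Ioi (0 : ℝ), Real.exp (-s ^ 2 / 2) / s * (Real.exp (s * wF) - Real.exp (s * wR))

/-- The stationary profile
ρ(v) := (N/a) e^{-(v−V_0)²/(2a)} ∫_{max(v,V_R)}^{V_F} e^{(w−V_0)²/(2a)} dw. -/
noncomputable def statProfile (N a V0 VR VF : ℝ) (v : ℝ) : ℝ :=
  N / a * Real.exp (-(v - V0) ^ 2 / (2 * a)) *
    ∫ w in (max v VR)..VF, Real.exp ((w - V0) ^ 2 / (2 * a))

open MeasureTheory Set Real
open scoped ENNReal

/-!
Substituting `v = V0 + √a * x` turns `ρ` into `N / √a` times the normalized profile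
`e^{-x²/2} ∫_{max(x,xR)}^{xF} e^{y²/2} dy = statProfile 1 1 0 xR xF x`, where
`xR = (VR - V0) / √a` and `xF = (VF - V0) / √a`. The mass of the normalized profile is the
integral of `e^{y²/2 - x²/2}` over the triangle `x < y`, `xR < y ≤ xF`. By Tonelli and
`s = y - x` it becomes `∫_{xR}^{xF} ∫_0^∞ e^{-s²/2 + s y} ds dy`, and integrating in `y` first
gives `∫_0^∞ e^{-s²/2} (e^{s xF} - e^{s xR}) / s ds = K xR xF`.
-/

lemma integrable_exp_neg_mul_sq_add_mul {b : ℝ} (hb : 0 < b) (c : ℝ) :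
    Integrable fun x : ℝ => exp (-b * x ^ 2 + c * x) := by
  refine (integrable_cexp_quadratic (b := b) (by simpa using hb) c 0).norm.congr
    (Filter.Eventually.of_forall fun x => ?_)
  simp [Complex.norm_exp, ← Complex.ofReal_pow]

lemma exp_mul_sub_exp_mul_le (s wR wF : ℝ) :
    exp (s * wF) - exp (s * wR) ≤ s * (wF - wR) * exp (s * wF) := by
  have hexp := add_one_le_exp (s * wR - s * wF)
  calc exp (s * wF) - exp (s * wR) = (1 - exp (s * wR - s * wF)) * exp (s * wF) := by
        rw [sub_mul, ← exp_add]; ring_nf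
    _ ≤ s * (wF - wR) * exp (s * wF) := by gcongr; linarith

lemma intervalIntegral_exp_mul {c : ℝ} (hc : c ≠ 0) (a b : ℝ) :
    ∫ x in a..b, exp (c * x) = (exp (c * b) - exp (c * a)) / c := by
  rw [intervalIntegral.integral_comp_mul_left (fun x => exp x) hc, integral_exp, smul_eq_mul,
    inv_mul_eq_div]

lemma integral_Iic_comp_add_mul {E : Type*} [NormedAddCommGroup E] [NormedSpace ℝ E] (f : ℝ → E)
    (d : ℝ) {c : ℝ} (hc : 0 < c) (b : ℝ) :
    ∫ x in Iic b, f (d + c * x) = c⁻¹ • ∫ x in Iic (d + c * b), f x := by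
  rw [← integral_indicator measurableSet_Iic, ← integral_indicator measurableSet_Iic,
    ← integral_add_left_eq_self ((Iic (d + c * b)).indicator f) d, ← abs_of_pos (inv_pos.2 hc),
    ← Measure.integral_comp_mul_left _ c]
  congr 1 with x
  simp [indicator_apply, hc]

lemma setLIntegral_Iio_eq_setLIntegral_Ioi_sub (f : ℝ → ℝ≥0∞) (y : ℝ) :
    ∫⁻ x in Iio y, f x = ∫⁻ s in Ioi 0, f (y - s) := by
  rw [← lintegral_indicator measurableSet_Iio, ← lintegral_indicator measurableSet_Ioi,
    ← lintegral_sub_left_eq_self _ y]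
  congr 1 with s
  simp [indicator_apply]

lemma lintegral_Iic_mul_lintegral_Ioc_max {f g : ℝ → ℝ≥0∞} (hf : Measurable f)
    (hg : Measurable g) (c b : ℝ) :
    ∫⁻ x in Iic b, f x * ∫⁻ y in Ioc (max x c) b, g y =
      ∫⁻ y in Ioc c b, g y * ∫⁻ x in Iio y, f x := by
  have hinner : ∀ x, f x * ∫⁻ y in Ioc (max x c) b, g y =
      ∫⁻ y in Ioc c b, f x * (Ioi x).indicator g y := by
    intro x
    rw [lintegral_const_mul _ (hg.indicator measurableSet_Ioi),
      lintegral_indicator measurableSet_Ioi, Measure.restrict_restrict measurableSet_Ioi,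
      inter_comm, Ioc_inter_Ioi, max_comm]
  have hmeas : AEMeasurable (Function.uncurry fun x y => f x * (Ioi x).indicator g y)
      ((volume.restrict (Iic b)).prod (volume.restrict (Ioc c b))) := by
    refine Measurable.aemeasurable ?_
    simp only [Function.uncurry_def, indicator_apply, mem_Ioi]
    exact (hf.comp measurable_fst).mul
      (Measurable.ite (measurableSet_lt measurable_fst measurable_snd) (hg.comp measurable_snd)
        measurable_const)
  simp_rw [hinner, lintegral_lintegral_swap hmeas]
  refine setLIntegral_congr_fun measurableSet_Ioc fun y hy => ?_
  have hind : ∀ x, f x * (Ioi x).indicator g y = (Iio y).indicator f x * g y := by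
    intro x
    by_cases hxy : x < y <;> simp [hxy]
  simp_rw [hind]
  rw [lintegral_mul_const _ (hf.indicator measurableSet_Iio),
    lintegral_indicator measurableSet_Iio, Measure.restrict_restrict measurableSet_Iio,
    inter_eq_left.2 (Iio_subset_Iic hy.2), mul_comm]

lemma K_integrand_nonneg {wR wF s : ℝ} (h : wR ≤ wF) (hs : 0 ≤ s) :
    0 ≤ exp (-s ^ 2 / 2) / s * (exp (s * wF) - exp (s * wR)) := by
  have hdiff : 0 ≤ exp (s * wF) - exp (s * wR) :=
    sub_nonneg.2 (exp_le_exp.2 (mul_le_mul_of_nonneg_left h hs))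
  positivity

lemma integrableOn_K_integrand {wR wF : ℝ} (h : wR ≤ wF) :
    IntegrableOn (fun s => exp (-s ^ 2 / 2) / s * (exp (s * wF) - exp (s * wR))) (Ioi 0) := by
  refine Integrable.mono' (((integrable_exp_neg_mul_sq_add_mul one_half_pos wF).const_mul
    (wF - wR)).integrableOn) (Measurable.aestronglyMeasurable (by fun_prop)) ?_
  refine (ae_restrict_iff' measurableSet_Ioi).2
    (Filter.Eventually.of_forall fun s (hs : 0 < s) => ?_)
  rw [norm_of_nonneg (K_integrand_nonneg h hs.le)]
  calc exp (-s ^ 2 / 2) / s * (exp (s * wF) - exp (s * wR))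
      ≤ exp (-s ^ 2 / 2) / s * (s * (wF - wR) * exp (s * wF)) := by
        gcongr
        exact exp_mul_sub_exp_mul_le s wR wF
    _ = (wF - wR) * exp (-(1 / 2) * s ^ 2 + wF * s) := by
        rw [exp_add]; field_simp

lemma K_nonneg {wR wF : ℝ} (h : wR ≤ wF) : 0 ≤ K wR wF :=
  setIntegral_nonneg measurableSet_Ioi fun _ hs => K_integrand_nonneg h hs.le

lemma continuous_statProfile (N a V0 VR VF : ℝ) : Continuous (statProfile N a V0 VR VF) := by
  have hprim : Continuous fun v => ∫ w in VF..max v VR, exp ((w - V0) ^ 2 / (2 * a)) :=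
    intervalIntegral.continuous_parametric_intervalIntegral_of_continuous (by fun_prop)
      (by fun_prop)
  unfold statProfile
  simp_rw [intervalIntegral.integral_symm VF]
  exact (continuous_const.mul (by fun_prop)).mul hprim.neg

lemma statProfile_nonneg {N a V0 VR VF v : ℝ} (hN : 0 ≤ N) (ha : 0 ≤ a) (hV : VR ≤ VF)
    (hv : v ≤ VF) : 0 ≤ statProfile N a V0 VR VF v := by
  have hint : 0 ≤ ∫ w in max v VR..VF, exp ((w - V0) ^ 2 / (2 * a)) :=
    intervalIntegral.integral_nonneg (max_le hv hV) fun w _ => (exp_pos _).le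
  unfold statProfile
  positivity

lemma statProfile_add_sqrt_mul {N a V0 VR VF : ℝ} (ha : 0 < a) (x : ℝ) :
    statProfile N a V0 VR VF (V0 + √a * x) =
      N / √a * statProfile 1 1 0 ((VR - V0) / √a) ((VF - V0) / √a) x := by
  have hr : 0 < √a := sqrt_pos.2 ha
  have hcoord : ∀ V, ∃ y, V = V0 + √a * y ∧ (V - V0) / √a = y :=
    fun V => ⟨(V - V0) / √a, by field_simp; ring, rfl⟩
  obtain ⟨xR, rfl, hxR⟩ := hcoord VR
  obtain ⟨xF, rfl, hxF⟩ := hcoord VF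
  have hsq : ∀ y, (V0 + √a * y - V0) ^ 2 / (2 * a) = y ^ 2 / 2 := fun y => by
    rw [add_sub_cancel_left, mul_pow, sq_sqrt ha.le]; field_simp
  unfold statProfile
  rw [hxR, hxF, ← add_max, ← mul_max_of_nonneg _ _ hr.le,
    ← intervalIntegral.smul_integral_comp_add_mul]
  simp_rw [neg_div, hsq, smul_eq_mul, sub_zero]
  field_simp
  rw [sq_sqrt ha.le]

lemma lintegral_statProfile_one_one_zero {xR xF : ℝ} (h : xR ≤ xF) :
    ∫⁻ x in Iic xF, ENNReal.ofReal (statProfile 1 1 0 xR xF x) = ENNReal.ofReal (K xR xF) := by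
  have hprofile : ∀ x ∈ Iic xF, ENNReal.ofReal (statProfile 1 1 0 xR xF x) =
      ENNReal.ofReal (exp (-x ^ 2 / 2)) *
        ∫⁻ y in Ioc (max x xR) xF, ENNReal.ofReal (exp (y ^ 2 / 2)) := by
    intro x hx
    simp only [statProfile, div_one, one_mul, sub_zero, mul_one]
    rw [ENNReal.ofReal_mul (exp_pos _).le, intervalIntegral.integral_of_le (max_le hx h),
      ofReal_integral_eq_lintegral_ofReal (by fun_prop : Continuous _).integrableOn_Ioc
        (Filter.Eventually.of_forall fun _ => (exp_pos _).le)]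
  have hreflect : ∀ y, ENNReal.ofReal (exp (y ^ 2 / 2)) *
      ∫⁻ x in Iio y, ENNReal.ofReal (exp (-x ^ 2 / 2)) =
      ∫⁻ s in Ioi 0, ENNReal.ofReal (exp (-s ^ 2 / 2) * exp (s * y)) := by
    intro y
    rw [setLIntegral_Iio_eq_setLIntegral_Ioi_sub, ← lintegral_const_mul' _ _ ENNReal.ofReal_ne_top]
    congr 1 with s
    rw [← ENNReal.ofReal_mul (exp_pos _).le, ← exp_add, ← exp_add]
    ring_nf
  have hinner : ∀ s ∈ Ioi (0 : ℝ),
      ∫⁻ y in Ioc xR xF, ENNReal.ofReal (exp (-s ^ 2 / 2) * exp (s * y)) =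
      ENNReal.ofReal (exp (-s ^ 2 / 2) / s * (exp (s * xF) - exp (s * xR))) := by
    intro s (hs : 0 < s)
    rw [← ofReal_integral_eq_lintegral_ofReal (by fun_prop : Continuous _).integrableOn_Ioc
        (Filter.Eventually.of_forall fun _ => by positivity), ← intervalIntegral.integral_of_le h,
      intervalIntegral.integral_const_mul, intervalIntegral_exp_mul hs.ne']
    ring_nf
  calc ∫⁻ x in Iic xF, ENNReal.ofReal (statProfile 1 1 0 xR xF x)
      = ∫⁻ x in Iic xF, ENNReal.ofReal (exp (-x ^ 2 / 2)) *
          ∫⁻ y in Ioc (max x xR) xF, ENNReal.ofReal (exp (y ^ 2 / 2)) :=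
        setLIntegral_congr_fun measurableSet_Iic hprofile
    _ = ∫⁻ y in Ioc xR xF, ∫⁻ s in Ioi 0, ENNReal.ofReal (exp (-s ^ 2 / 2) * exp (s * y)) := by
        rw [lintegral_Iic_mul_lintegral_Ioc_max (by fun_prop) (by fun_prop)]
        simp_rw [hreflect]
    _ = ∫⁻ s in Ioi 0, ∫⁻ y in Ioc xR xF, ENNReal.ofReal (exp (-s ^ 2 / 2) * exp (s * y)) :=
        lintegral_lintegral_swap (by fun_prop)
    _ = ∫⁻ s in Ioi 0, ENNReal.ofReal (exp (-s ^ 2 / 2) / s * (exp (s * xF) - exp (s * xR))) :=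
        setLIntegral_congr_fun measurableSet_Ioi hinner
    _ = ENNReal.ofReal (K xR xF) :=
        (ofReal_integral_eq_lintegral_ofReal (integrableOn_K_integrand h)
          ((ae_restrict_iff' measurableSet_Ioi).2
            (Filter.Eventually.of_forall fun s hs => K_integrand_nonneg h hs.le))).symm

lemma integral_statProfile_one_one_zero {xR xF : ℝ} (h : xR ≤ xF) :
    ∫ x in Iic xF, statProfile 1 1 0 xR xF x = K xR xF := by
  have hnonneg : 0 ≤ᵐ[volume.restrict (Iic xF)] statProfile 1 1 0 xR xF :=
    (ae_restrict_iff' measurableSet_Iic).2 (Filter.Eventually.of_forall fun _ hx =>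
      statProfile_nonneg zero_le_one zero_le_one h hx)
  rw [integral_eq_lintegral_of_nonneg_ae hnonneg
      (continuous_statProfile _ _ _ _ _).aestronglyMeasurable,
    lintegral_statProfile_one_one_zero h, ENNReal.toReal_ofReal (K_nonneg h)]

lemma integral_statProfile {N a V0 VR VF : ℝ} (ha : 0 < a) (hV : VR ≤ VF) :
    ∫ v in Iic VF, statProfile N a V0 VR VF v = N * K ((VR - V0) / √a) ((VF - V0) / √a) := by
  have hr : 0 < √a := sqrt_pos.2 ha
  have hsubst := integral_Iic_comp_add_mul (statProfile N a V0 VR VF) V0 hr ((VF - V0) / √a)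
  rw [mul_div_cancel₀ _ hr.ne', add_sub_cancel] at hsubst
  simp_rw [statProfile_add_sqrt_mul ha, integral_const_mul] at hsubst
  rw [integral_statProfile_one_one_zero (by gcongr)] at hsubst
  rw [smul_eq_mul, ← div_eq_inv_mul, div_mul_eq_mul_div, div_left_inj' hr.ne'] at hsubst
  exact hsubst.symm

theorem statProfile_mass_general (VR VF N a τ V0 : ℝ) (hV : VR < VF) (ha : 0 < a) :
    (∫ v in Set.Iic VF, statProfile N a V0 VR VF v) =
      N * K ((VR - V0) / Real.sqrt a) ((VF - V0) / Real.sqrt a) ∧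
    ((∫ v in Set.Iic VF, statProfile N a V0 VR VF v) + τ * N = 1 ↔
      N * (τ + K ((VR - V0) / Real.sqrt a) ((VF - V0) / Real.sqrt a)) = 1) := by
  have hmass := integral_statProfile (N := N) (V0 := V0) ha hV.le
  refine ⟨hmass, ?_⟩
  rw [hmass, mul_add, add_comm, mul_comm τ]

theorem statProfile_mass (VR VF N a τ V0 : ℝ) (hV : VR < VF) (hN : 0 < N) (ha : 0 < a)
    (hτ : 0 < τ) :
    (∫ v in Set.Iic VF, statProfile N a V0 VR VF v) =
      N * K ((VR - V0) / Real.sqrt a) ((VF - V0) / Real.sqrt a) ∧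
    ((∫ v in Set.Iic VF, statProfile N a V0 VR VF v) + τ * N = 1 ↔
      N * (τ + K ((VR - V0) / Real.sqrt a) ((VF - V0) / Real.sqrt a)) = 1) :=
  statProfile_mass_general VR VF N a τ V0 hV ha
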